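/- For a diagonal section δ, the function h^δ is upper-semicontinuous: for every x ∈ [0,1], limsup_{u→x} h^δ(u) ≤ h^δ(x). -/
import Mathlib


open Set MeasureTheory Filter Topology

def IsDiagonalSection (d : ℝ → ℝ) : Prop :=
  (∀ x ∈ Icc (0:ℝ) 1, d x ∈ Icc (0:ℝ) 1) ∧
  (∀ x ∈ Icc (0:ℝ) 1, d x ≤ x) ∧
  (∀ x ∈ Icc (0:ℝ) 1, ∀ y ∈ Icc (0:ℝ) 1, x ≤ y → 0 ≤ d y - d x ∧ d y - d x ≤ 2*(y-x)) ∧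
  d 1 = 1

def hset (d : ℝ → ℝ) (x : ℝ) : Set ℝ :=
  {y | y ∈ Icc (0:ℝ) 1 ∧ x ≤ y ∧ ∀ t ∈ Icc x y, x - d x ≤ t - d t}

noncomputable def hfun (d : ℝ → ℝ) (x : ℝ) : ℝ := sSup (hset d x)

lemma self_mem_hset (d : ℝ → ℝ) {x : ℝ} (hx : x ∈ Icc (0:ℝ) 1) : x ∈ hset d x := by
  refine ⟨hx, le_refl x, fun t ht => ?_⟩
  have : t = x := le_antisymm ht.2 ht.1
  simp [this]

lemma hset_bddAbove (d : ℝ → ℝ) (x : ℝ) : BddAbove (hset d x) :=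
  ⟨1, fun _ hy => hy.1.2⟩

-- 1-Lipschitz lower bound: (u - d u) ≥ (x - d x) - |u - x|
lemma dhat_lip (d : ℝ → ℝ) (hd : IsDiagonalSection d) {u x : ℝ}
    (hu : u ∈ Icc (0:ℝ) 1) (hx : x ∈ Icc (0:ℝ) 1) :
    x - d x - |u - x| ≤ u - d u := by
  obtain ⟨_, _, hmono, _⟩ := hd
  rcases le_total u x with h | h
  · have := hmono u hu x hx h
    rw [abs_of_nonpos (by linarith)]
    linarith [this.1, this.2]
  · have := hmono x hx u hu h
    rw [abs_of_nonneg (by linarith)]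
    linarith [this.1, this.2]

theorem hfun_upper_semicontinuous (d : ℝ → ℝ) (hd : IsDiagonalSection d) :
    ∀ x ∈ Icc (0:ℝ) 1, limsup (hfun d) (nhdsWithin x (Icc (0:ℝ) 1)) ≤ hfun d x := by
  intro x hx
  haveI hne : (𝓝[Icc (0:ℝ) 1] x).NeBot := nhdsWithin_neBot_of_mem hx
  -- basic bounds for hfun on [0,1]
  have hself : ∀ u ∈ Icc (0:ℝ) 1, u ≤ hfun d u := fun u hu =>
    le_csSup (hset_bddAbove d u) (self_mem_hset d hu)
  have hle1 : ∀ u ∈ Icc (0:ℝ) 1, hfun d u ≤ 1 := fun u hu =>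
    csSup_le ⟨u, self_mem_hset d hu⟩ (fun y hy => hy.1.2)
  have hcobdd : IsCoboundedUnder (· ≤ ·) (𝓝[Icc (0:ℝ) 1] x) (hfun d) := by
    apply isCoboundedUnder_le_of_eventually_le (𝓝[Icc (0:ℝ) 1] x) (x := (0:ℝ))
    filter_upwards [self_mem_nhdsWithin] with u hu
    exact le_trans hu.1 (hself u hu)
  by_contra hcon
  push_neg at hcon
  obtain ⟨c, hc1, hc2⟩ := exists_between hcon
  -- c > hfun d x, so c ∉ hset d x
  have hxc : x ≤ c := le_trans (hself x hx) hc1.le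
  have hcIcc : c ∈ Icc (0:ℝ) 1 := ⟨le_trans hx.1 hxc, by
    calc c ≤ limsup (hfun d) (𝓝[Icc (0:ℝ) 1] x) := hc2.le
    _ ≤ 1 := limsup_le_of_le hcobdd (by
        filter_upwards [self_mem_nhdsWithin] with u hu using hle1 u hu)⟩
  have hcnot : c ∉ hset d x := fun h => absurd (le_csSup (hset_bddAbove d x) h) hc1.not_ge
  have : ¬ (∀ t ∈ Icc x c, x - d x ≤ t - d t) := fun h => hcnot ⟨hcIcc, hxc, h⟩
  push_neg at this
  obtain ⟨t0, ht0, ht0lt⟩ := this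
  have ht0Icc : t0 ∈ Icc (0:ℝ) 1 := ⟨le_trans hx.1 ht0.1, le_trans ht0.2 hcIcc.2⟩
  have hxt0 : x < t0 := by
    rcases lt_or_eq_of_le ht0.1 with h | h
    · exact h
    · exact absurd ht0lt (by rw [← h]; linarith)
  set ε := (x - d x) - (t0 - d t0) with hε
  have hεpos : 0 < ε := by simp [hε]; linarith
  set r := min ε (t0 - x) with hr
  have hrpos : 0 < r := lt_min hεpos (by linarith)
  -- eventually hfun d u ≤ c
  have hev : ∀ᶠ u in 𝓝[Icc (0:ℝ) 1] x, hfun d u ≤ c := by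
    have hball : ∀ᶠ u in 𝓝 x, |u - x| < r := by
      have := Metric.ball_mem_nhds x hrpos
      filter_upwards [this] with u hu
      simpa [Real.dist_eq] using hu
    filter_upwards [nhdsWithin_le_nhds hball, self_mem_nhdsWithin] with u hur huI
    -- u < t0 and u - d u > t0 - d t0
    have hult : u < t0 := by
      have := hur.trans_le (min_le_right _ _)
      have : u - x < t0 - x := lt_of_le_of_lt (le_abs_self _) this
      linarith
    have hgt : t0 - d t0 < u - d u := by
      have hlip := dhat_lip d hd huI hx
      have : |u - x| < ε := hur.trans_le (min_le_left _ _)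
      linarith
    -- every y in hset d u is < t0
    have : hfun d u ≤ t0 := by
      apply csSup_le ⟨u, self_mem_hset d huI⟩
      intro y hy
      by_contra hyt
      push_neg at hyt
      have := hy.2.2 t0 ⟨hult.le, hyt.le⟩
      linarith
    linarith [ht0.2]
  exact absurd (limsup_le_of_le hcobdd hev) (not_le.mpr hc2)
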